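/- arXiv:1202.4703 — 2 statements merged into one kernel-verified Lean document; each statement's English description precedes it below -/
import Mathlib

section
/- Let Ω = (0,∞) with its Borel σ-field, P a probability measure on Ω equivalent to Lebesgue measure, and ξ the identity random variable ξ(ω) = ω. Let K = {(α, β) ∈ ℝ² : 0 ≤ β ≤ √α ≤ 1} and C = {1 − α + (α + β)ξ : (α, β) ∈ K} ⊆ L0+. Then the set of outer support points of C equals C^max \ {1}; that is, for every γ ∈ (0,1] the element g_γ = 1 − γ + (γ + √γ)ξ is an outer support point of C, while the constant 1 is not. -/
open MeasureTheory Filter Set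

noncomputable section

variable {Ω : Type*} [MeasurableSpace Ω]

/-- The nonnegative orthant `L⁰₊` of the space `L⁰` of (a.e.-equivalence classes of)
random variables over `(Ω, ℱ, P)`. -/
def L0plus (P : Measure Ω) : Set (Ω →ₘ[P] ℝ) := {f | 0 ≤ f}

/-- The metric `(f, g) ↦ E[1 ∧ |f - g|]` inducing the topology of convergence
in probability on `L⁰`. -/
def dist0 (P : Measure Ω) (f g : Ω →ₘ[P] ℝ) : ℝ :=
  ∫ ω, min 1 |f ω - g ω| ∂P

/-- Convergence in probability of a sequence in `L⁰`. -/
def Tendsto0 (P : Measure Ω) (f : ℕ → Ω →ₘ[P] ℝ) (g : Ω →ₘ[P] ℝ) : Prop :=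
  Tendsto (fun n => dist0 P (f n) g) atTop (nhds 0)

/-- Closure of a set in `L⁰` with respect to the topology of convergence in probability. -/
def closure0 (P : Measure Ω) (C : Set (Ω →ₘ[P] ℝ)) : Set (Ω →ₘ[P] ℝ) :=
  {f | ∀ ε : ℝ, 0 < ε → ∃ g ∈ C, dist0 P f g < ε}

/-- A set of `L⁰` is closed iff it contains its closure. -/
def IsClosed0 (P : Measure Ω) (C : Set (Ω →ₘ[P] ℝ)) : Prop :=
  closure0 P C ⊆ C

/-- Boundedness (in probability) of a set `C ⊆ L⁰₊` : `lim_{ℓ → ∞} sup_{f ∈ C} P[f > ℓ] = 0`. -/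
def Bounded0 (P : Measure Ω) (C : Set (Ω →ₘ[P] ℝ)) : Prop :=
  Tendsto (fun ℓ : ℝ => ⨆ f ∈ C, P {ω | ℓ < f ω}) atTop (nhds 0)

/-- The set `C^max` of maximal elements of `C ⊆ L⁰₊` : `f ∈ C` such that `f ≤ g` a.s.
and `g ∈ C` imply `f = g` a.s. -/
def maxSet (P : Measure Ω) (C : Set (Ω →ₘ[P] ℝ)) : Set (Ω →ₘ[P] ℝ) :=
  {f | f ∈ C ∧ ∀ g ∈ C, f ≤ g → f = g}

/-- `C` is max-closed if every maximal element of its closure already belongs to `C`. -/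
def MaxClosed (P : Measure Ω) (C : Set (Ω →ₘ[P] ℝ)) : Prop :=
  maxSet P (closure0 P C) ⊆ C

/-- The pairing `⟨μ, f⟩ = ∫ f dμ ∈ [0, ∞]` between a nonnegative measure `μ` and `f ∈ L⁰₊`. -/
def pairing {P : Measure Ω} (μ : Measure Ω) (f : Ω →ₘ[P] ℝ) : ENNReal :=
  ∫⁻ ω, ENNReal.ofReal (f ω) ∂μ

/-- The set `C^osp` of outer support points of `C ⊆ L⁰₊`: points `g ∈ C^max` for which there
is a σ-finite nonnegative measure `μ ≪ P` with `0 < sup_{f ∈ C} ⟨μ, f⟩ = ⟨μ, g⟩ < ∞`;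
by convention `{0}^osp = {0}`. -/
def osp (P : Measure Ω) (C : Set (Ω →ₘ[P] ℝ)) : Set (Ω →ₘ[P] ℝ) :=
  {g | g ∈ maxSet P C ∧
    (C = {0} ∨ ∃ μ : Measure Ω, μ ≪ P ∧ SigmaFinite μ ∧
      0 < pairing μ g ∧ pairing μ g < ⊤ ∧ (⨆ f ∈ C, pairing μ f) = pairing μ g)}

/-- The solid hull of `C ⊆ L⁰₊`. -/
def solidHull (P : Measure Ω) (C : Set (Ω →ₘ[P] ℝ)) : Set (Ω →ₘ[P] ℝ) :=
  {f | f ∈ L0plus P ∧ ∃ g ∈ C, f ≤ g}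

/-- A set `S ⊆ L⁰₊` is solid if `g ∈ S` and `0 ≤ f ≤ g` imply `f ∈ S`. -/
def Solid (P : Measure Ω) (S : Set (Ω →ₘ[P] ℝ)) : Prop :=
  ∀ g ∈ S, ∀ f : Ω →ₘ[P] ℝ, 0 ≤ f → f ≤ g → f ∈ S

/-- `(g n)` is a sequence of forward convex combinations of `(f n)`. -/
def ForwardConvexComb (P : Measure Ω) (f g : ℕ → Ω →ₘ[P] ℝ) : Prop :=
  ∀ n : ℕ, g n ∈ convexHull ℝ (f '' Set.Ici n)

end

noncomputable section

/-- The sample space `Ω = (0, ∞)` with its Borel σ-field. -/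
abbrev OmegaInf : Type := Set.Ioi (0:ℝ)

/-- Lebesgue measure on `(0, ∞)`. -/
noncomputable def LebInf : Measure OmegaInf :=
  (volume : Measure ℝ).comap Subtype.val

/-- The identity random variable `ξ(ω) = ω`, as an element of `L⁰`. -/
noncomputable def xi (P : Measure OmegaInf) : OmegaInf →ₘ[P] ℝ :=
  AEEqFun.mk (fun ω => (ω : ℝ)) measurable_subtype_coe.aestronglyMeasurable

/-- `K = {(α, β) ∈ ℝ² : 0 ≤ β ≤ √α ≤ 1}` (with `α ≥ 0`). -/
def Kset : Set (ℝ × ℝ) :=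
  {p | 0 ≤ p.1 ∧ 0 ≤ p.2 ∧ p.2 ≤ Real.sqrt p.1 ∧ Real.sqrt p.1 ≤ 1}

/-- The random variable `1 - α + (α + β) ξ`, as an element of `L⁰`. -/
noncomputable def elt (P : Measure OmegaInf) (a b : ℝ) : OmegaInf →ₘ[P] ℝ :=
  AEEqFun.const OmegaInf (1 - a) + (a + b) • xi P

/-- The set `C = {1 - α + (α + β) ξ : (α, β) ∈ K} ⊆ L⁰₊`. -/
noncomputable def Cex (P : Measure OmegaInf) : Set (OmegaInf →ₘ[P] ℝ) :=
  {h | ∃ p ∈ Kset, h = elt P p.1 p.2}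

/-- The constant random variable `1`, as an element of `L⁰`. -/
noncomputable def oneL (P : Measure OmegaInf) : OmegaInf →ₘ[P] ℝ :=
  AEEqFun.const OmegaInf (1 : ℝ)

end

/-!
Since an affine function of `ξ` that is nonnegative a.s. has nonnegative coefficients,
`elt P a b ≤ elt P a' b'` holds exactly when `a' ≤ a` and `a + b ≤ a' + b'`; hence the maximal
elements of `C` are the `g_γ = elt P γ √γ`, `γ ∈ [0, 1]`, with `g_0 = 1`.
For `γ > 0`, pairing with Lebesgue measure on `(0, c]` is an affine functional of `(a, b)` which,
for the right `c`, is maximised over `K` at `(γ, √γ)` by AM-GM (`2 √γ b ≤ a + γ`).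
For `γ = 0`, an admissible `μ` has `⟨μ, 1⟩ = μ(Ω) < ∞` and `⟨μ, ξ⟩ > 0`, and along the maximal
elements `1 - t² + (t² + t) ξ` the pairing grows like `t ⟨μ, ξ⟩ - t² μ(Ω)`, so it exceeds
`⟨μ, 1⟩` for small `t > 0`.
-/

open Topology

instance : LebInf.IsOpenPosMeasure :=
  .comap volume isOpen_Ioi.isOpenEmbedding_subtypeVal

lemma nonneg_of_forall_pos_nonneg_add_mul {d t : ℝ} (h : ∀ x : ℝ, 0 < x → 0 ≤ d + t * x) :
    0 ≤ d ∧ 0 ≤ t := by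
  constructor
  · have hlim : Tendsto (fun x => d + t * x) (𝓝[>] 0) (𝓝 d) := by
      have hcont : Continuous fun x : ℝ => d + t * x := by fun_prop
      exact (hcont.tendsto' 0 d (by simp)).mono_left nhdsWithin_le_nhds
    exact ge_of_tendsto hlim (eventually_nhdsWithin_of_forall h)
  · have hlim : Tendsto (fun x => d * x⁻¹ + t) atTop (𝓝 t) := by
      simpa using (tendsto_inv_atTop_zero.const_mul d).add_const t
    refine ge_of_tendsto hlim (eventually_gt_atTop 0 |>.mono fun x hx => ?_)
    have hx_inv : d * x⁻¹ + t = (d + t * x) * x⁻¹ := by field_simp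
    rw [hx_inv]
    exact mul_nonneg (h x hx) (inv_nonneg.mpr hx.le)

lemma nonneg_of_ae_nonneg_add_mul {d t : ℝ} (h : ∀ᵐ ω : OmegaInf ∂LebInf, 0 ≤ d + t * ω) :
    0 ≤ d ∧ 0 ≤ t := by
  have hclosed : IsClosed {ω : OmegaInf | 0 ≤ d + t * ω} :=
    isClosed_le continuous_const (by fun_prop)
  have huniv := (Measure.dense_of_ae h).closure_eq
  rw [hclosed.closure_eq] at huniv
  exact nonneg_of_forall_pos_nonneg_add_mul fun x hx => eq_univ_iff_forall.mp huniv ⟨x, hx⟩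

lemma val_image_setOf_le (c : ℝ) : Subtype.val '' {ω : OmegaInf | (ω : ℝ) ≤ c} = Ioc 0 c := by
  ext x
  simp [and_comm]

lemma lebInf_restrict_setOf_le_univ (c : ℝ) :
    LebInf.restrict {ω : OmegaInf | (ω : ℝ) ≤ c} univ = ENNReal.ofReal c := by
  rw [Measure.restrict_apply_univ, LebInf,
    (MeasurableEmbedding.subtype_coe measurableSet_Ioi).comap_apply, val_image_setOf_le,
    Real.volume_Ioc, sub_zero]

lemma lintegral_lebInf_restrict_setOf_le {c : ℝ} (hc : 0 ≤ c) :
    ∫⁻ ω, ENNReal.ofReal ω ∂LebInf.restrict {ω : OmegaInf | (ω : ℝ) ≤ c}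
      = ENNReal.ofReal (c ^ 2 / 2) := by
  rw [LebInf, setLIntegral_subtype measurableSet_Ioi, val_image_setOf_le,
    ← ofReal_integral_eq_lintegral_ofReal continuous_id'.integrableOn_Ioc
      (ae_restrict_of_forall_mem measurableSet_Ioc fun x (hx : x ∈ Ioc 0 c) => hx.1.le),
    ← intervalIntegral.integral_of_le hc, integral_id, sq, zero_pow two_ne_zero, sub_zero]

lemma lintegral_ofReal_pos {μ : Measure OmegaInf} (hμ : μ ≠ 0) :
    0 < ∫⁻ ω, ENNReal.ofReal ω ∂μ := by
  rw [pos_iff_ne_zero, Ne, lintegral_eq_zero_iff measurable_subtype_coe.ennreal_ofReal]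
  intro h
  refine hμ (ae_eq_bot.mp (eventually_false_iff_eq_bot.mp ?_))
  filter_upwards [h] with ω hω
  exact (ENNReal.ofReal_pos.mpr ω.2).ne' hω

lemma pairing_value_le_at_sqrt {γ a b c : ℝ} (hγ : 0 ≤ γ) (ha : 0 ≤ a) (hba : b ≤ √a)
    (hc0 : 0 ≤ c) (hc : c * (2 * √γ + 1) = 4 * √γ) :
    (1 - a) * c + (a + b) * (c ^ 2 / 2) ≤ (1 - γ) * c + (γ + √γ) * (c ^ 2 / 2) := by
  set s := √γ
  have hs : 0 ≤ s := Real.sqrt_nonneg γ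
  have hγs : γ = s ^ 2 := (Real.sq_sqrt hγ).symm
  have hamgm : 2 * s * b ≤ a + s ^ 2 := by
    nlinarith [sq_nonneg (√a - s), Real.sq_sqrt ha, mul_le_mul_of_nonneg_left hba hs]
  have hgap : (2 * s + 1) * (((1 - γ) * c + (γ + s) * (c ^ 2 / 2))
      - ((1 - a) * c + (a + b) * (c ^ 2 / 2))) = c * (a + s ^ 2 - 2 * s * b) := by
    rw [hγs]
    linear_combination (s ^ 2 + s - a - b) * c / 2 * hc
  refine sub_nonneg.mp (nonneg_of_mul_nonneg_right ?_ (by positivity : (0 : ℝ) < 2 * s + 1))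
  rw [hgap]
  exact mul_nonneg hc0 (by linarith)

lemma exists_lt_one_sub_sq_mul_add {m S : ℝ} (hm : 0 < m) (hS : 0 < S) :
    ∃ t ∈ Ioc (0 : ℝ) 1, m < (1 - t ^ 2) * m + (t ^ 2 + t) * S := by
  set t := min 1 (S / (2 * m))
  have ht0 : 0 < t := lt_min one_pos (by positivity)
  have htm : t * m < S := calc
    t * m ≤ S / (2 * m) * m := by gcongr; exact min_le_right _ _
    _ = S / 2 := by field_simp
    _ < S := half_lt_self hS
  exact ⟨t, ⟨ht0, min_le_left _ _⟩, by nlinarith [mul_pos (mul_pos ht0 ht0) hS]⟩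

section

variable {P : Measure OmegaInf}

lemma coeFn_elt (a b : ℝ) : elt P a b =ᵐ[P] fun ω => 1 - a + (a + b) * ω := by
  filter_upwards [AEEqFun.coeFn_add (AEEqFun.const OmegaInf (1 - a)) ((a + b) • xi P),
    AEEqFun.coeFn_smul (a + b) (xi P), AEEqFun.coeFn_const (μ := P) OmegaInf (1 - a),
    AEEqFun.coeFn_mk (μ := P) _ measurable_subtype_coe.aestronglyMeasurable]
    with ω h_add h_smul h_const h_xi
  rw [elt, h_add, Pi.add_apply, h_smul, Pi.smul_apply, smul_eq_mul, h_const, xi, h_xi,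
    Function.const_apply]

lemma elt_le_elt_iff (hLP : LebInf ≪ P) {a b a' b' : ℝ} :
    elt P a b ≤ elt P a' b' ↔ a' ≤ a ∧ a + b ≤ a' + b' := by
  rw [← AEEqFun.coeFn_le]
  constructor
  · intro h
    have hLeb : ∀ᵐ ω : OmegaInf ∂LebInf, 0 ≤ (a - a') + ((a' + b') - (a + b)) * ω := by
      refine hLP.ae_le ?_
      filter_upwards [h, coeFn_elt a b, coeFn_elt a' b'] with ω hω h₁ h₂
      rw [h₁, h₂] at hω
      linarith
    obtain ⟨hd, ht⟩ := nonneg_of_ae_nonneg_add_mul hLeb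
    constructor <;> linarith
  · rintro ⟨h₁, h₂⟩
    filter_upwards [coeFn_elt a b, coeFn_elt a' b'] with ω hω hω'
    rw [hω, hω']
    nlinarith [mul_le_mul_of_nonneg_right h₂ ω.2.le]

lemma elt_eq_elt_iff (hLP : LebInf ≪ P) {a b a' b' : ℝ} :
    elt P a b = elt P a' b' ↔ a = a' ∧ b = b' := by
  refine ⟨fun h => ?_, fun ⟨rfl, rfl⟩ => rfl⟩
  have h₁ := (elt_le_elt_iff hLP).mp h.le
  have h₂ := (elt_le_elt_iff hLP).mp h.ge
  constructor <;> linarith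

lemma oneL_eq_elt : oneL P = elt P 0 0 := by
  simp [oneL, elt]

lemma oneL_ne_zero (hLP : LebInf ≪ P) : oneL P ≠ 0 := by
  have hzero : elt P 1 (-1) = 0 := by
    rw [elt, sub_self, add_neg_cancel, zero_smul, add_zero]
    rfl
  rw [oneL_eq_elt, ← hzero, Ne, elt_eq_elt_iff hLP]
  norm_num

lemma elt_mem_Cex {a b : ℝ} (h : (a, b) ∈ Kset) : elt P a b ∈ Cex P := ⟨(a, b), h, rfl⟩

lemma mem_maxSet_Cex_iff (hLP : LebInf ≪ P) {g : OmegaInf →ₘ[P] ℝ} :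
    g ∈ maxSet P (Cex P) ↔ ∃ γ ∈ Icc (0 : ℝ) 1, g = elt P γ √γ := by
  constructor
  · rintro ⟨⟨⟨a, b⟩, ⟨ha, hb, hba, ha1⟩, rfl⟩, hmax⟩
    have hsqrt : elt P a b = elt P a √a :=
      hmax _ (elt_mem_Cex ⟨ha, Real.sqrt_nonneg a, le_rfl, ha1⟩)
        ((elt_le_elt_iff hLP).mpr ⟨le_rfl, by linarith⟩)
    exact ⟨a, ⟨ha, Real.sqrt_le_one.mp ha1⟩, hsqrt⟩
  · rintro ⟨γ, ⟨hγ0, hγ1⟩, rfl⟩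
    refine ⟨elt_mem_Cex ⟨hγ0, Real.sqrt_nonneg γ, le_rfl, Real.sqrt_le_one.mpr hγ1⟩, ?_⟩
    rintro _ ⟨⟨a, b⟩, ⟨ha, hb, hba, ha1⟩, rfl⟩ hle
    dsimp only at *
    obtain ⟨haγ, hsum⟩ := (elt_le_elt_iff hLP).mp hle
    have hsqrt : √a ≤ √γ := Real.sqrt_le_sqrt haγ
    have ha : a = γ := by linarith
    subst ha
    exact (elt_eq_elt_iff hLP).mpr ⟨rfl, by linarith⟩

lemma pairing_elt {μ : Measure OmegaInf} (hμP : μ ≪ P) {a b : ℝ} (ha : a ≤ 1)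
    (hab : 0 ≤ a + b) :
    pairing μ (elt P a b) = ENNReal.ofReal (1 - a) * μ univ
      + ENNReal.ofReal (a + b) * ∫⁻ ω, ENNReal.ofReal ω ∂μ := by
  have hpointwise : (fun ω => ENNReal.ofReal (elt P a b ω)) =ᵐ[μ]
      fun ω => ENNReal.ofReal (1 - a) + ENNReal.ofReal (a + b) * ENNReal.ofReal ω := by
    filter_upwards [hμP.ae_le (coeFn_elt a b)] with ω hω
    rw [hω, ENNReal.ofReal_add (by linarith) (mul_nonneg hab ω.2.le), ENNReal.ofReal_mul hab]
  rw [pairing, lintegral_congr_ae hpointwise, lintegral_add_left measurable_const,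
    lintegral_const, lintegral_const_mul _ measurable_subtype_coe.ennreal_ofReal]

lemma elt_sqrt_mem_osp (hLP : LebInf ≪ P) {γ : ℝ} (hγ : γ ∈ Ioc 0 1) :
    elt P γ √γ ∈ osp P (Cex P) := by
  obtain ⟨hγ0, hγ1⟩ := hγ
  -- `c` is chosen so that `(γ, √γ)` maximises `(a, b) ↦ (1 - a) c + (a + b) c² / 2` on `K`.
  set c := 4 * √γ / (2 * √γ + 1)
  have hc : c * (2 * √γ + 1) = 4 * √γ := div_mul_cancel₀ _ (by positivity)
  have hc0 : 0 < c := by positivity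
  set μ := LebInf.restrict {ω : OmegaInf | (ω : ℝ) ≤ c}
  have hμP : μ ≪ P := (Measure.absolutelyContinuous_of_le Measure.restrict_le_self).trans hLP
  have hpairing {a b : ℝ} (ha : a ≤ 1) (hab : 0 ≤ a + b) :
      pairing μ (elt P a b) = ENNReal.ofReal ((1 - a) * c + (a + b) * (c ^ 2 / 2)) := by
    rw [pairing_elt hμP ha hab, lebInf_restrict_setOf_le_univ,
      lintegral_lebInf_restrict_setOf_le hc0.le, ← ENNReal.ofReal_mul (by linarith),
      ← ENNReal.ofReal_mul hab, ← ENNReal.ofReal_add (by nlinarith) (by positivity)]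
  have hγK : (γ, √γ) ∈ Kset := ⟨hγ0.le, Real.sqrt_nonneg γ, le_rfl, Real.sqrt_le_one.mpr hγ1⟩
  refine ⟨(mem_maxSet_Cex_iff hLP).mpr ⟨γ, ⟨hγ0.le, hγ1⟩, rfl⟩, Or.inr ⟨μ, hμP, ?_, ?_, ?_, ?_⟩⟩
  · have : IsFiniteMeasure μ := ⟨(lebInf_restrict_setOf_le_univ c).trans_lt ENNReal.ofReal_lt_top⟩
    infer_instance
  · rw [hpairing hγ1 (by positivity), ENNReal.ofReal_pos]
    exact add_pos_of_nonneg_of_pos (mul_nonneg (by linarith) hc0.le) (by positivity)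
  · rw [hpairing hγ1 (by positivity)]
    exact ENNReal.ofReal_lt_top
  · refine le_antisymm (iSup₂_le ?_) (le_biSup _ (elt_mem_Cex hγK))
    rintro _ ⟨⟨a, b⟩, ⟨ha, hb, hba, ha1⟩, rfl⟩
    rw [hpairing (Real.sqrt_le_one.mp ha1) (by positivity), hpairing hγ1 (by positivity)]
    exact ENNReal.ofReal_le_ofReal (pairing_value_le_at_sqrt hγ0.le ha hba hc0.le hc)

lemma oneL_notMem_osp (hLP : LebInf ≪ P) : oneL P ∉ osp P (Cex P) := by
  have honeK : ((0 : ℝ), (0 : ℝ)) ∈ Kset := by simp [Kset]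
  have honeC : oneL P ∈ Cex P := oneL_eq_elt (P := P) ▸ elt_mem_Cex honeK
  rintro ⟨-, hC | ⟨μ, hμP, -, hpos, hfin, hsup⟩⟩
  · exact oneL_ne_zero hLP (mem_singleton_iff.mp (hC ▸ honeC))
  have hone : pairing μ (oneL P) = μ univ := by
    simp [oneL_eq_elt, pairing_elt (a := 0) (b := 0) hμP zero_le_one (add_zero 0).ge]
  rw [hone] at hpos hfin hsup
  obtain ⟨S, hS0, hS_pos, hS_le⟩ := ENNReal.lt_iff_exists_real_btwn.mp
    (lintegral_ofReal_pos (Measure.measure_univ_ne_zero.mp hpos.ne'))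
  have hm : 0 < (μ univ).toReal := ENNReal.toReal_pos hpos.ne' hfin.ne
  obtain ⟨t, ⟨ht0, ht1⟩, hlt⟩ := exists_lt_one_sub_sq_mul_add hm (ENNReal.ofReal_pos.mp hS_pos)
  have htK : (t ^ 2, t) ∈ Kset :=
    ⟨by positivity, ht0.le, by rw [Real.sqrt_sq ht0.le], by rwa [Real.sqrt_sq ht0.le]⟩
  refine (le_biSup (fun f => pairing μ f) (elt_mem_Cex (P := P) htK)).not_gt ?_
  rw [hsup, pairing_elt hμP (by nlinarith) (by positivity)]
  calc μ univ = ENNReal.ofReal (μ univ).toReal := (ENNReal.ofReal_toReal hfin.ne).symm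
    _ < ENNReal.ofReal ((1 - t ^ 2) * (μ univ).toReal + (t ^ 2 + t) * S) :=
      ENNReal.ofReal_lt_ofReal_iff'.mpr ⟨hlt, hm.trans hlt⟩
    _ = ENNReal.ofReal (1 - t ^ 2) * ENNReal.ofReal (μ univ).toReal
        + ENNReal.ofReal (t ^ 2 + t) * ENNReal.ofReal S := by
      rw [← ENNReal.ofReal_mul (by nlinarith), ← ENNReal.ofReal_mul (by positivity),
        ← ENNReal.ofReal_add (mul_nonneg (by nlinarith) ENNReal.toReal_nonneg)
          (mul_nonneg (by positivity) hS0)]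
    _ ≤ ENNReal.ofReal (1 - t ^ 2) * μ univ
        + ENNReal.ofReal (t ^ 2 + t) * ∫⁻ ω, ENNReal.ofReal ω ∂μ := by
      rw [ENNReal.ofReal_toReal hfin.ne]
      gcongr

end

theorem statement16_general (P : Measure OmegaInf) (hLP : LebInf ≪ P) :
    osp P (Cex P) = maxSet P (Cex P) \ {oneL P} ∧
    (∀ γ ∈ Set.Ioc (0:ℝ) 1, elt P γ (Real.sqrt γ) ∈ osp P (Cex P)) ∧
    oneL P ∉ osp P (Cex P) := by
  refine ⟨?_, fun γ hγ => elt_sqrt_mem_osp hLP hγ, oneL_notMem_osp hLP⟩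
  ext g
  refine ⟨fun hg => ⟨hg.1, ?_⟩, fun ⟨hmax, hne⟩ => ?_⟩
  · rintro rfl
    exact oneL_notMem_osp hLP hg
  · obtain ⟨γ, ⟨hγ0, hγ1⟩, rfl⟩ := (mem_maxSet_Cex_iff hLP).mp hmax
    refine elt_sqrt_mem_osp hLP ⟨hγ0.lt_of_ne ?_, hγ1⟩
    rintro rfl
    exact hne (by rw [Real.sqrt_zero, oneL_eq_elt, mem_singleton_iff])

/-- For `Ω = (0, ∞)`, `P` a probability equivalent to Lebesgue measure,
and `C = {1 - α + (α + β) ξ : (α, β) ∈ K}`, the set of outer support points of `C` equals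
`C^max \\ {1}`; that is, for every `γ ∈ (0, 1]` the element `g_γ = 1 - γ + (γ + √γ) ξ` is
an outer support point of `C`, while the constant `1` is not. -/
theorem statement16 (P : Measure OmegaInf) [IsProbabilityMeasure P]
    (hPL : P ≪ LebInf) (hLP : LebInf ≪ P) :
    osp P (Cex P) = maxSet P (Cex P) \ {oneL P} ∧
    (∀ γ ∈ Set.Ioc (0:ℝ) 1, elt P γ (Real.sqrt γ) ∈ osp P (Cex P)) ∧
    oneL P ∉ osp P (Cex P) :=
  statement16_general P hLP
end

section
/- Let U: Ω × (0,∞) → ℝ be a utility random field: U(·, x) is a random variable for each x ∈ (0,∞), and for each ω ∈ Ω the map U(ω, ·) is nondecreasing, concave and continuously differentiable on (0,∞), with derivative random field U′ and extensions U(·, 0) = lim_{x↓0} U(·, x), U′(·, 0) = lim_{x↓0} U′(·, x), U(∞) = lim_{x→∞} U(·, x). Assume E_P[0 ∨ U(∞)] < ∞. Let C ⊂ L0+ be convex, max-closed and bounded, containing some h with P[h = 0] = 0, and let g ∈ C^max satisfy E_P[U(g)] = sup_{f ∈ C} E_P[U(f)] < ∞. Assume further that E_P[U(n^{-1} g)]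 > −∞ for all n ∈ ℕ and that P[g > 0, U(g) < U(∞)] > 0. Then g is an outer support point of C; in fact the σ-finite measure μ defined by dμ = U′(g) dP satisfies 0 < sup_{f ∈ C} ∫ f dμ = ∫ g dμ < ∞. -/
open MeasureTheory Filter Set

noncomputable section

/-- The "nonnegative part in `[0,∞]`" of an extended real number
(`⊤ ↦ ⊤`, `x ↦ max x 0` for `x` real, `⊥ ↦ 0`). -/
def erealPosPart (x : EReal) : ENNReal :=
  if x = ⊤ then ⊤ else ENNReal.ofReal (max x 0).toReal

variable {Ω : Type*} [MeasurableSpace Ω]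

/-- The utility random field extended to `x = 0` (and junk nonpositive values) by its
limiting value `U0 ω = lim_{x ↓ 0} U(ω, x) ∈ [-∞, ∞)`. -/
def Ufield (U : Ω → ℝ → ℝ) (U0 : Ω → EReal) (ω : Ω) (x : ℝ) : EReal :=
  if 0 < x then (U ω x : EReal) else U0 ω

/-- The expected utility functional `𝕌(f) = E_P[U(f)] ∈ [-∞, ∞)`, defined as the
difference of the integrals of the positive and negative parts of `U(f)`. -/
def EU (P : Measure Ω) (U : Ω → ℝ → ℝ) (U0 : Ω → EReal) (f : Ω →ₘ[P] ℝ) : EReal :=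
  ((∫⁻ ω, erealPosPart (Ufield U U0 ω (f ω)) ∂P : ENNReal) : EReal)
    - ((∫⁻ ω, erealPosPart (-(Ufield U U0 ω (f ω))) ∂P : ENNReal) : EReal)

/-- The measure `dμ = U'(g) dP`, where `U'(g)(ω) = U'(ω, g(ω))` for `g(ω) > 0` and
`U'(g)(ω) = U'(ω, 0) = lim_{x ↓ 0} U'(ω, x) ∈ [0, ∞]` when `g(ω) = 0`. -/
def muOf (P : Measure Ω) (U' : Ω → ℝ → ℝ) (U'0 : Ω → ENNReal) (g : Ω →ₘ[P] ℝ) :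
    Measure Ω :=
  P.withDensity (fun ω => if 0 < g ω then ENNReal.ofReal (U' ω (g ω)) else U'0 ω)

end

/-!
For `f ∈ C` and `ε ∈ (0, 1/2]` the point `z = (1 - ε) g + ε f` lies in `C`, so
`E[U(z)] ≤ E[U(g)]`, while concavity gives `U(g) ≤ U(z) - ε U'(z) (f - g)` pointwise (at `g = 0`
after letting the argument decrease to `0`). Hence `E[U'(z) f] ≤ E[U'(z) g]`. As `ε → 0`,
Fatou's lemma on the left and dominated convergence on the right, with the integrable majorant
`U'(g/2) g ≤ 4 (U(g/2) - U(g/4))`, give `⟨μ, f⟩ ≤ ⟨μ, g⟩ < ∞` for `dμ = U'(g) dP`.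
Positivity: where `U'(g) = 0` the utility is flat beyond `g`, so `U(g) = U(∞)` there.
σ-finiteness: `⟨μ, h⟩ < ∞` with `h > 0` a.s. forces `U'(g) < ∞` a.s.
-/

open MeasureTheory Filter Set Topology
open scoped ENNReal

lemma erealPosPart_coe (r : ℝ) : erealPosPart r = ENNReal.ofReal r := by
  rw [erealPosPart, if_neg (EReal.coe_ne_top r)]
  rcases le_total r 0 with h | h
  · rw [max_eq_right (EReal.coe_nonpos.2 h), ENNReal.ofReal_of_nonpos h]
    simp
  · rw [max_eq_left (EReal.coe_nonneg.2 h), EReal.toReal_coe]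

lemma erealPosPart_mono : Monotone erealPosPart := by
  intro x y h
  induction x with
  | bot => simp [erealPosPart]
  | top => rw [top_le_iff.1 h]
  | coe a =>
    induction y with
    | bot => exact absurd h (by simp)
    | top => simp [erealPosPart]
    | coe b =>
      rw [erealPosPart_coe, erealPosPart_coe]
      exact ENNReal.ofReal_le_ofReal (EReal.coe_le_coe_iff.1 h)

lemma measurable_erealPosPart : Measurable erealPosPart := erealPosPart_mono.measurable

lemma enorm_toReal_le_erealPosPart_add (x : EReal) :
    ‖x.toReal‖ₑ ≤ erealPosPart x + erealPosPart (-x) := by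
  induction x with
  | bot => simp
  | top => simp
  | coe r =>
    rw [← EReal.coe_neg, erealPosPart_coe, erealPosPart_coe, EReal.toReal_coe,
      Real.enorm_eq_ofReal_abs]
    rcases le_total r 0 with h | h
    · rw [abs_of_nonpos h, ENNReal.ofReal_of_nonpos h, zero_add]
    · rw [abs_of_nonneg h, ENNReal.ofReal_of_nonpos (neg_nonpos.2 h), add_zero]

lemma EReal.ne_top_of_coe_ennreal_sub_ne_bot {a b : ℝ≥0∞} (h : (a : EReal) - b ≠ ⊥) :
    b ≠ ⊤ := by
  rintro rfl
  exact h (EReal.sub_top _)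

section LintegralErealPosPart

variable {α : Type*} [MeasurableSpace α] {μ : Measure α} {X : α → EReal}

lemma integrable_toReal_of_lintegral_erealPosPart_ne_top (hX : AEMeasurable X μ)
    (hpos : ∫⁻ a, erealPosPart (X a) ∂μ ≠ ⊤) (hneg : ∫⁻ a, erealPosPart (-X a) ∂μ ≠ ⊤) :
    Integrable (fun a => (X a).toReal) μ := by
  refine ⟨(measurable_ereal_toReal.comp_aemeasurable hX).aestronglyMeasurable, ?_⟩
  calc ∫⁻ a, ‖(X a).toReal‖ₑ ∂μ
      ≤ ∫⁻ a, erealPosPart (X a) + erealPosPart (-X a) ∂μ :=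
        lintegral_mono fun a => enorm_toReal_le_erealPosPart_add (X a)
    _ = ∫⁻ a, erealPosPart (X a) ∂μ + ∫⁻ a, erealPosPart (-X a) ∂μ :=
        lintegral_add_left' (measurable_erealPosPart.comp_aemeasurable hX) _
    _ < ⊤ := ENNReal.add_lt_top.2 ⟨hpos.lt_top, hneg.lt_top⟩

lemma coe_lintegral_erealPosPart_sub_eq_integral (hX : AEMeasurable X μ)
    (hpos : ∫⁻ a, erealPosPart (X a) ∂μ ≠ ⊤) (hneg : ∫⁻ a, erealPosPart (-X a) ∂μ ≠ ⊤) :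
    ((∫⁻ a, erealPosPart (X a) ∂μ : ℝ≥0∞) : EReal) - (∫⁻ a, erealPosPart (-X a) ∂μ : ℝ≥0∞)
      = ((∫ a, (X a).toReal ∂μ : ℝ) : EReal) := by
  have hreal : ∀ᵐ a ∂μ, X a = ((X a).toReal : EReal) := by
    filter_upwards [ae_lt_top' (measurable_erealPosPart.comp_aemeasurable hX) hpos,
      ae_lt_top' (measurable_erealPosPart.comp_aemeasurable hX.neg) hneg] with a htop hbot
    refine (EReal.coe_toReal ?_ ?_).symm
    · rintro h; simp [h, erealPosPart] at htop
    · rintro h; simp [h, erealPosPart] at hbot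
  have hpos' : ∫⁻ a, erealPosPart (X a) ∂μ = ∫⁻ a, ENNReal.ofReal (X a).toReal ∂μ :=
    lintegral_congr_ae (hreal.mono fun a h => by
      dsimp only
      rw [h, erealPosPart_coe, EReal.toReal_coe])
  have hneg' : ∫⁻ a, erealPosPart (-X a) ∂μ = ∫⁻ a, ENNReal.ofReal (-(X a).toReal) ∂μ :=
    lintegral_congr_ae (hreal.mono fun a h => by
      dsimp only
      rw [h, ← EReal.coe_neg, erealPosPart_coe, EReal.toReal_coe])
  rw [integral_eq_lintegral_pos_part_sub_lintegral_neg_part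
      (integrable_toReal_of_lintegral_erealPosPart_ne_top hX hpos hneg), EReal.coe_sub,
    ← hpos', ← hneg', EReal.coe_ennreal_toReal hpos, EReal.coe_ennreal_toReal hneg]

end LintegralErealPosPart

lemma sigmaFinite_withDensity_of_lintegral_mul_ne_top {α : Type*} [MeasurableSpace α]
    {μ : Measure α} [SigmaFinite μ] {ρ h : α → ℝ≥0∞} (hρ : AEMeasurable ρ μ)
    (hh : AEMeasurable h μ) (hpos : ∀ᵐ a ∂μ, h a ≠ 0) (hfin : ∫⁻ a, ρ a * h a ∂μ ≠ ⊤) :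
    SigmaFinite (μ.withDensity ρ) := by
  refine SigmaFinite.withDensity_of_ne_top ?_
  filter_upwards [ae_lt_top' (hρ.mul hh) hfin, hpos] with a ha hpos hρtop
  simp [hρtop, ENNReal.top_mul hpos] at ha

section Integrals

variable {α : Type*} [MeasurableSpace α] {μ : Measure α}

lemma integrable_and_integral_le_of_mul_le_add_sub {a b φ ψ : α → ℝ} {ε : ℝ} (hε : 0 < ε)
    (ha : 0 ≤ᵐ[μ] a) (ham : AEStronglyMeasurable a μ) (hb : Integrable b μ)
    (hφ : Integrable φ μ) (hψ : Integrable ψ μ) (h : ∀ᵐ x ∂μ, ε * a x ≤ ε * b x + (φ x - ψ x))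
    (hφψ : ∫ x, φ x ∂μ ≤ ∫ x, ψ x ∂μ) : Integrable a μ ∧ ∫ x, a x ∂μ ≤ ∫ x, b x ∂μ := by
  have hai : Integrable a μ := by
    refine (hb.add ((hφ.sub hψ).const_mul ε⁻¹)).mono' ham ?_
    filter_upwards [h, ha] with x hx (hax : 0 ≤ a x)
    rw [Real.norm_of_nonneg hax]
    simp only [Pi.add_apply, Pi.sub_apply]
    rw [← mul_le_mul_iff_of_pos_left hε, mul_add, mul_inv_cancel_left₀ hε.ne']
    linarith
  refine ⟨hai, ?_⟩
  have hint := integral_mono_ae (hai.const_mul ε) ((hb.const_mul ε).add (hφ.sub hψ)) h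
  rw [integral_const_mul, integral_add' (hb.const_mul ε) (hφ.sub hψ), integral_const_mul,
    integral_sub' hφ hψ] at hint
  nlinarith

lemma lintegral_mul_ofReal_eq_ofReal_integral {ρ : α → ℝ≥0∞} {t : α → ℝ} (ht : 0 ≤ᵐ[μ] t)
    (hρt : ∀ᵐ x ∂μ, ρ x ≠ ⊤ ∨ t x = 0) (hint : Integrable (fun x => (ρ x).toReal * t x) μ) :
    ∫⁻ x, ρ x * ENNReal.ofReal (t x) ∂μ = ENNReal.ofReal (∫ x, (ρ x).toReal * t x ∂μ) := by
  rw [ofReal_integral_eq_lintegral_ofReal hint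
    (ht.mono fun x h => mul_nonneg ENNReal.toReal_nonneg h)]
  refine lintegral_congr_ae ?_
  filter_upwards [hρt] with x h
  rcases h with h | h
  · rw [ENNReal.ofReal_mul ENNReal.toReal_nonneg, ENNReal.ofReal_toReal h]
  · simp [h]

end Integrals

lemma ConcaveOn.le_add_mul_sub_of_hasDerivAt {S : Set ℝ} {u : ℝ → ℝ} {d x y : ℝ}
    (hu : ConcaveOn ℝ S u) (hx : x ∈ S) (hy : y ∈ S) (hd : HasDerivAt u d x) :
    u y ≤ u x + d * (y - x) := by
  rcases lt_trichotomy x y with hxy | rfl | hxy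
  · have := hu.slope_le_of_hasDerivAt hx hy hxy hd
    rw [slope_def_field, div_le_iff₀ (sub_pos.2 hxy)] at this
    linarith
  · simp
  · have := hu.le_slope_of_hasDerivAt hy hx hxy hd
    rw [slope_def_field, le_div_iff₀ (sub_pos.2 hxy)] at this
    linarith

/-- `U'(ω, x)` in `[0, ∞]`, extended to `x ≤ 0` by `U'(ω, 0⁺)`: the density of `muOf` is
`fun ω => derivField U' U'0 ω (g ω)`. -/
noncomputable def derivField {Ω : Type*} (U' : Ω → ℝ → ℝ) (U'0 : Ω → ℝ≥0∞) (ω : Ω)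
    (x : ℝ) : ℝ≥0∞ :=
  if 0 < x then ENNReal.ofReal (U' ω x) else U'0 ω

section Pointwise

variable {Ω : Type*} {U U' : Ω → ℝ → ℝ} {U0 Uinf : Ω → EReal} {U'0 : Ω → ℝ≥0∞} {ω : Ω}
  {x y : ℝ}

lemma Ufield_of_pos (hx : 0 < x) : Ufield U U0 ω x = U ω x := if_pos hx

lemma Ufield_of_nonpos (hx : x ≤ 0) : Ufield U U0 ω x = U0 ω := if_neg hx.not_gt

lemma derivField_of_pos (hx : 0 < x) : derivField U' U'0 ω x = ENNReal.ofReal (U' ω x) :=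
  if_pos hx

lemma derivField_of_nonpos (hx : x ≤ 0) : derivField U' U'0 ω x = U'0 ω := if_neg hx.not_gt

lemma derivField_ne_top (hx : 0 < x) : derivField U' U'0 ω x ≠ ⊤ := by
  rw [derivField_of_pos hx]
  exact ENNReal.ofReal_ne_top

lemma monotone_Ufield (hmono : MonotoneOn (U ω) (Ioi 0))
    (hU0 : Tendsto (fun x => (U ω x : EReal)) (𝓝[>] 0) (𝓝 (U0 ω))) :
    Monotone (Ufield U U0 ω) := by
  have hU0_le : ∀ y, 0 < y → U0 ω ≤ U ω y := fun y hy => by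
    refine le_of_tendsto hU0 ?_
    filter_upwards [Ioo_mem_nhdsGT hy] with z hz
    exact EReal.coe_le_coe_iff.2 (hmono hz.1 hy hz.2.le)
  intro x y hxy
  rcases le_or_gt y 0 with hy | hy
  · rw [Ufield_of_nonpos hy, Ufield_of_nonpos (hxy.trans hy)]
  rw [Ufield_of_pos hy]
  rcases le_or_gt x 0 with hx | hx
  · rw [Ufield_of_nonpos hx]
    exact hU0_le y hy
  · rw [Ufield_of_pos hx]
    exact EReal.coe_le_coe_iff.2 (hmono hx hy hxy)

lemma Ufield_ne_top (hmono : MonotoneOn (U ω) (Ioi 0))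
    (hU0 : Tendsto (fun x => (U ω x : EReal)) (𝓝[>] 0) (𝓝 (U0 ω))) (x : ℝ) :
    Ufield U U0 ω x ≠ ⊤ := by
  have hpos : 0 < max x 1 := lt_max_of_lt_right one_pos
  refine ne_top_of_le_ne_top (EReal.coe_ne_top (U ω (max x 1))) ?_
  rw [← Ufield_of_pos hpos]
  exact monotone_Ufield hmono hU0 (le_max_left x 1)

lemma Ufield_le_Uinf (hmono : MonotoneOn (U ω) (Ioi 0))
    (hU0 : Tendsto (fun x => (U ω x : EReal)) (𝓝[>] 0) (𝓝 (U0 ω)))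
    (hUinf : Tendsto (fun x => (U ω x : EReal)) atTop (𝓝 (Uinf ω))) (x : ℝ) :
    Ufield U U0 ω x ≤ Uinf ω := by
  refine ge_of_tendsto hUinf ?_
  filter_upwards [eventually_gt_atTop (max x 0)] with y hy
  rw [← Ufield_of_pos ((le_max_right x 0).trans_lt hy)]
  exact monotone_Ufield hmono hU0 ((le_max_left x 0).trans hy.le)

lemma Ufield_le_tangent (hconc : ConcaveOn ℝ (Ioi 0) (U ω))
    (hderiv : ∀ x ∈ Ioi (0:ℝ), HasDerivAt (U ω) (U' ω x) x)
    (hU0 : Tendsto (fun x => (U ω x : EReal)) (𝓝[>] 0) (𝓝 (U0 ω))) (hx : 0 ≤ x) (hy : 0 < y) :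
    Ufield U U0 ω x ≤ ((U ω y + U' ω y * (x - y) : ℝ) : EReal) := by
  have htangent : ∀ z, 0 < z → U ω z ≤ U ω y + U' ω y * (z - y) := fun z hz =>
    hconc.le_add_mul_sub_of_hasDerivAt hy hz (hderiv y hy)
  rcases hx.eq_or_lt with rfl | hx
  · rw [Ufield_of_nonpos le_rfl]
    have hcont : Continuous fun z : ℝ => ((U ω y + U' ω y * (z - y) : ℝ) : EReal) :=
      continuous_coe_real_ereal.comp (by fun_prop)
    refine le_of_tendsto_of_tendsto hU0 ((hcont.tendsto 0).mono_left nhdsWithin_le_nhds) ?_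
    filter_upwards [self_mem_nhdsWithin] with z hz
    exact EReal.coe_le_coe_iff.2 (htangent z hz)
  · rw [Ufield_of_pos hx]
    exact EReal.coe_le_coe_iff.2 (htangent x hx)

lemma deriv_nonneg_of_monotoneOn (hmono : MonotoneOn (U ω) (Ioi 0))
    (hconc : ConcaveOn ℝ (Ioi 0) (U ω)) (hderiv : ∀ x ∈ Ioi (0:ℝ), HasDerivAt (U ω) (U' ω x) x)
    (hx : 0 < x) : 0 ≤ U' ω x := by
  have hx1 : (0:ℝ) < x + 1 := by linarith
  have h1 := hmono hx hx1 (by linarith)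
  have h2 := hconc.le_add_mul_sub_of_hasDerivAt hx hx1 (hderiv x hx)
  linarith

lemma Uinf_eq_of_deriv_nonpos (hmono : MonotoneOn (U ω) (Ioi 0))
    (hconc : ConcaveOn ℝ (Ioi 0) (U ω)) (hderiv : ∀ x ∈ Ioi (0:ℝ), HasDerivAt (U ω) (U' ω x) x)
    (hUinf : Tendsto (fun x => (U ω x : EReal)) atTop (𝓝 (Uinf ω))) (hx : 0 < x)
    (hderiv_x : U' ω x ≤ 0) : Uinf ω = U ω x := by
  refine tendsto_nhds_unique hUinf (tendsto_const_nhds.congr' ?_)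
  filter_upwards [eventually_ge_atTop x] with y hy
  have h1 := hmono hx (hx.trans_le hy) hy
  have h2 := hconc.le_add_mul_sub_of_hasDerivAt hx (hx.trans_le hy) (hderiv x hx)
  have : U ω y = U ω x := by nlinarith
  rw [this]

lemma antitone_derivField (hconc : ConcaveOn ℝ (Ioi 0) (U ω))
    (hderiv : ∀ x ∈ Ioi (0:ℝ), HasDerivAt (U ω) (U' ω x) x)
    (hU'0 : Tendsto (fun x => ENNReal.ofReal (U' ω x)) (𝓝[>] 0) (𝓝 (U'0 ω))) :
    Antitone (derivField U' U'0 ω) := by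
  have hanti : AntitoneOn (U' ω) (Ioi 0) := fun a ha b hb hab => by
    rw [← (hderiv a ha).deriv, ← (hderiv b hb).deriv]
    exact hconc.antitoneOn_deriv (fun z hz => (hderiv z hz).differentiableAt) ha hb hab
  intro x y hxy
  rcases le_or_gt y 0 with hy | hy
  · rw [derivField_of_nonpos hy, derivField_of_nonpos (hxy.trans hy)]
  rw [derivField_of_pos hy]
  rcases le_or_gt x 0 with hx | hx
  · rw [derivField_of_nonpos hx]
    refine ge_of_tendsto hU'0 ?_
    filter_upwards [Ioo_mem_nhdsGT hy] with z hz
    exact ENNReal.ofReal_le_ofReal (hanti hz.1 hy hz.2.le)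
  · rw [derivField_of_pos hx]
    exact ENNReal.ofReal_le_ofReal (hanti hx hy hxy)

lemma tendsto_derivField (hcont : ContinuousOn (U' ω) (Ioi 0))
    (hU'0 : Tendsto (fun x => ENNReal.ofReal (U' ω x)) (𝓝[>] 0) (𝓝 (U'0 ω))) (hx : 0 ≤ x) :
    Tendsto (derivField U' U'0 ω) (𝓝[Ioi 0] x) (𝓝 (derivField U' U'0 ω x)) := by
  have hev : (fun z => ENNReal.ofReal (U' ω z)) =ᶠ[𝓝[Ioi 0] x] derivField U' U'0 ω :=
    eventually_mem_nhdsWithin.mono fun z hz => (derivField_of_pos hz).symm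
  rcases hx.eq_or_lt with rfl | hx
  · rw [derivField_of_nonpos le_rfl]
    exact hU'0.congr' hev
  · rw [derivField_of_pos hx]
    refine Tendsto.congr' hev ?_
    rw [nhdsWithin_eq_nhds.2 (Ioi_mem_nhds hx)]
    exact ENNReal.continuous_ofReal.continuousAt.tendsto.comp
      ((hcont.continuousAt (Ioi_mem_nhds hx)).tendsto)

lemma derivField_mul_sub_le (hconc : ConcaveOn ℝ (Ioi 0) (U ω))
    (hderiv : ∀ x ∈ Ioi (0:ℝ), HasDerivAt (U ω) (U' ω x) x) (hy : 0 < y) (hyx : y ≤ x) :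
    derivField U' U'0 ω x * ENNReal.ofReal (x - y)
      ≤ erealPosPart (Ufield U U0 ω x) + erealPosPart (-Ufield U U0 ω y) := by
  have hx := hy.trans_le hyx
  have htangent := hconc.le_add_mul_sub_of_hasDerivAt hx hy (hderiv x hx)
  rw [derivField_of_pos hx, Ufield_of_pos hx, Ufield_of_pos hy, ← EReal.coe_neg,
    erealPosPart_coe, erealPosPart_coe, ← ENNReal.ofReal_mul' (sub_nonneg.2 hyx)]
  calc ENNReal.ofReal (U' ω x * (x - y)) ≤ ENNReal.ofReal (U ω x + -U ω y) :=
        ENNReal.ofReal_le_ofReal (by linarith)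
    _ ≤ _ := ENNReal.ofReal_add_le

lemma toReal_derivField_mul_le (hmono : MonotoneOn (U ω) (Ioi 0))
    (hconc : ConcaveOn ℝ (Ioi 0) (U ω)) (hderiv : ∀ x ∈ Ioi (0:ℝ), HasDerivAt (U ω) (U' ω x) x)
    (hU0 : Tendsto (fun x => (U ω x : EReal)) (𝓝[>] 0) (𝓝 (U0 ω)))
    {ε : ℝ} (hε0 : 0 < ε) (hε1 : ε < 1) (hx : 0 ≤ x) (hy : 0 ≤ y) (hbot : Ufield U U0 ω x ≠ ⊥) :
    ε * ((derivField U' U'0 ω ((1 - ε) * x + ε * y)).toReal * y)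
      ≤ ε * ((derivField U' U'0 ω ((1 - ε) * x + ε * y)).toReal * x)
        + ((Ufield U U0 ω ((1 - ε) * x + ε * y)).toReal - (Ufield U U0 ω x).toReal) := by
  rcases le_or_gt ((1 - ε) * x + ε * y) 0 with hz | hz
  · obtain ⟨rfl, rfl⟩ : x = 0 ∧ y = 0 := ⟨by nlinarith, by nlinarith⟩
    simp
  have htangent := Ufield_le_tangent hconc hderiv hU0 hx hz
  rw [← EReal.coe_toReal (Ufield_ne_top hmono hU0 x) hbot, EReal.coe_le_coe_iff] at htangent
  rw [derivField_of_pos hz,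
    ENNReal.toReal_ofReal (deriv_nonneg_of_monotoneOn hmono hconc hderiv hz), Ufield_of_pos hz,
    EReal.toReal_coe]
  nlinarith

lemma tendsto_derivField_convexComb_mul (hcont : ContinuousOn (U' ω) (Ioi 0))
    (hU'0 : Tendsto (fun x => ENNReal.ofReal (U' ω x)) (𝓝[>] 0) (𝓝 (U'0 ω)))
    {ε : ℕ → ℝ} (hε : Tendsto ε atTop (𝓝 0)) (hε0 : ∀ n, 0 < ε n) (hε1 : ∀ n, ε n ≤ 2⁻¹)
    (hx : 0 ≤ x) (hy : 0 ≤ y) {t : ℝ} (ht : t ≤ x + y) :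
    Tendsto (fun n => derivField U' U'0 ω ((1 - ε n) * x + ε n * y) * ENNReal.ofReal t) atTop
      (𝓝 (derivField U' U'0 ω x * ENNReal.ofReal t)) := by
  rcases (add_nonneg hx hy).eq_or_lt with hxy | hxy
  · simp [ENNReal.ofReal_of_nonpos (ht.trans hxy.ge)]
  refine ENNReal.Tendsto.mul_const ?_ (Or.inr ENNReal.ofReal_ne_top)
  refine (tendsto_derivField hcont hU'0 hx).comp
    (tendsto_nhdsWithin_iff.2 ⟨?_, Eventually.of_forall fun n => ?_⟩)
  · simpa using ((tendsto_const_nhds (x := (1:ℝ)).sub hε).mul_const x).add (hε.mul_const y)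
  · show 0 < (1 - ε n) * x + ε n * y
    nlinarith [hε0 n, hε1 n]

end Pointwise

section Measurability

variable {Ω β : Type*} [MeasurableSpace Ω] {P : Measure Ω} [MeasurableSpace β]

lemma aemeasurable_apply_of_countable {ι : Type*} [Countable ι] [MeasurableSpace ι]
    [MeasurableSingletonClass ι] {F : ι → Ω → β} (hF : ∀ i, AEMeasurable (F i) P) {k : Ω → ι}
    (hk : Measurable k) : AEMeasurable (fun ω => F (k ω) ω) P :=
  ⟨fun ω => (hF (k ω)).mk _ ω,
    (measurable_from_prod_countable_left (f := fun p : Ω × ι => (hF p.2).mk _ p.1)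
      fun i => (hF i).measurable_mk).comp (measurable_id.prodMk hk),
    (ae_all_iff.2 fun i => (hF i).ae_eq_mk).mono fun ω h => h (k ω)⟩

lemma tendsto_ceil_mul_two_pow_div (x : ℝ) :
    Tendsto (fun n : ℕ => (⌈x * 2 ^ n⌉ : ℝ) / 2 ^ n) atTop (𝓝 x) := by
  have hupper : Tendsto (fun n : ℕ => x + (2 ^ n : ℝ)⁻¹) atTop (𝓝 x) := by
    simpa using tendsto_const_nhds.add (tendsto_inv_atTop_zero.comp
      (tendsto_pow_atTop_atTop_of_one_lt (one_lt_two (α := ℝ))))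
  refine tendsto_of_tendsto_of_tendsto_of_le_of_le tendsto_const_nhds hupper (fun n => ?_)
    (fun n => ?_)
  · rw [le_div_iff₀ (by positivity)]
    exact Int.le_ceil _
  · rw [div_le_iff₀ (by positivity), add_mul, inv_mul_cancel₀ (by positivity)]
    exact (Int.ceil_lt_add_one _).le

variable [TopologicalSpace β] [TopologicalSpace.PseudoMetrizableSpace β] [BorelSpace β]

lemma aemeasurable_ite_pos_of_continuousOn {V : Ω → ℝ → β} {G : Ω → β}
    (hV : ∀ x, 0 < x → AEMeasurable (fun ω => V ω x) P) (hVc : ∀ ω, ContinuousOn (V ω) (Ioi 0))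
    (hG : AEMeasurable G P) {v : Ω → ℝ} (hv : AEMeasurable v P) :
    AEMeasurable (fun ω => if 0 < v ω then V ω (v ω) else G ω) P := by
  suffices ∀ v : Ω → ℝ, Measurable v →
      AEMeasurable (fun ω => if 0 < v ω then V ω (v ω) else G ω) P from
    (this _ hv.measurable_mk).congr (hv.ae_eq_mk.mono fun ω h => by simp only [h])
  intro v hv
  -- evaluate along the dyadic upper approximations `⌈v 2ⁿ⌉ / 2ⁿ`, which take countably many values
  let W : ℕ → ℤ → Ω → β := fun n k ω => if 0 < k then V ω (k / 2 ^ n) else G ω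
  have hW : ∀ n k, AEMeasurable (W n k) P := fun n k => by
    by_cases hk : 0 < k
    · simpa only [W, if_pos hk] using hV _ (by positivity)
    · simpa only [W, if_neg hk] using hG
  refine aemeasurable_of_tendsto_metrizable_ae'
    (fun n => aemeasurable_apply_of_countable (hW n) (hv.mul_const (2 ^ n : ℝ)).ceil)
    (ae_of_all _ fun ω => ?_)
  have h2 : ∀ n : ℕ, (0:ℝ) < 2 ^ n := fun n => by positivity
  simp only [W, Int.ceil_pos, mul_pos_iff_of_pos_right, h2]
  split_ifs with h
  · exact ((hVc ω).continuousAt (Ioi_mem_nhds h)).tendsto.comp (tendsto_ceil_mul_two_pow_div _)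
  · exact tendsto_const_nhds

lemma aemeasurable_of_tendsto_nhdsGT_zero {F : Ω → ℝ → β} {G : Ω → β}
    (hF : ∀ x, 0 < x → AEMeasurable (fun ω => F ω x) P)
    (hG : ∀ ω, Tendsto (F ω) (𝓝[>] 0) (𝓝 (G ω))) : AEMeasurable G P :=
  aemeasurable_of_tendsto_metrizable_ae' (fun n => hF _ (by positivity : (0:ℝ) < ((n:ℝ) + 1)⁻¹))
    (ae_of_all _ fun ω => (hG ω).comp (tendsto_inv_atTop_nhdsGT_zero.comp
      (tendsto_atTop_add_const_right _ 1 tendsto_natCast_atTop_atTop)))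

end Measurability

lemma ae_nonneg_of_mem_L0plus {Ω : Type*} [MeasurableSpace Ω] {P : Measure Ω}
    {f : Ω →ₘ[P] ℝ} (hf : f ∈ L0plus P) : 0 ≤ᵐ[P] f := by
  filter_upwards [AEEqFun.coeFn_le.2 hf, AEEqFun.coeFn_zero (β := ℝ) (μ := P)] with ω h h0
  rwa [h0] at h

lemma lintegral_erealPosPart_neg_Ufield_ne_top_of_EU_ne_bot {Ω : Type*} [MeasurableSpace Ω]
    {P : Measure Ω} {U : Ω → ℝ → ℝ} {U0 : Ω → EReal} {c : ℝ} {g : Ω →ₘ[P] ℝ}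
    (h : EU P U U0 (c • g) ≠ ⊥) :
    ∫⁻ ω, erealPosPart (-Ufield U U0 ω (c * g ω)) ∂P ≠ ⊤ := by
  have hcoe : ∫⁻ ω, erealPosPart (-Ufield U U0 ω (c * g ω)) ∂P
      = ∫⁻ ω, erealPosPart (-Ufield U U0 ω ((c • g) ω)) ∂P :=
    lintegral_congr_ae ((AEEqFun.coeFn_smul c g).mono fun ω hω => by simp only [hω]; rfl)
  rw [hcoe]
  exact EReal.ne_top_of_coe_ennreal_sub_ne_bot h

structure IsUtilityField {Ω : Type*} [MeasurableSpace Ω] (P : Measure Ω) (U U' : Ω → ℝ → ℝ)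
    (U0 Uinf : Ω → EReal) (U'0 : Ω → ℝ≥0∞) : Prop where
  aemeasurable : ∀ x : ℝ, 0 < x → AEMeasurable (fun ω => U ω x) P
  monotoneOn : ∀ ω, MonotoneOn (U ω) (Ioi 0)
  concaveOn : ∀ ω, ConcaveOn ℝ (Ioi 0) (U ω)
  hasDerivAt : ∀ ω, ∀ x ∈ Ioi (0:ℝ), HasDerivAt (U ω) (U' ω x) x
  continuousOn_deriv : ∀ ω, ContinuousOn (U' ω) (Ioi 0)
  tendsto_zero : ∀ ω, Tendsto (fun x => (U ω x : EReal)) (𝓝[>] 0) (𝓝 (U0 ω))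
  tendsto_deriv_zero : ∀ ω, Tendsto (fun x => ENNReal.ofReal (U' ω x)) (𝓝[>] 0) (𝓝 (U'0 ω))
  tendsto_atTop : ∀ ω, Tendsto (fun x => (U ω x : EReal)) atTop (𝓝 (Uinf ω))

namespace IsUtilityField

variable {Ω : Type*} [MeasurableSpace Ω] {P : Measure Ω} {U U' : Ω → ℝ → ℝ}
  {U0 Uinf : Ω → EReal} {U'0 : Ω → ℝ≥0∞}

lemma continuousOn (hU : IsUtilityField P U U' U0 Uinf U'0) (ω : Ω) :
    ContinuousOn (U ω) (Ioi 0) :=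
  fun x hx => (hU.hasDerivAt ω x hx).continuousAt.continuousWithinAt

lemma aemeasurable_deriv (hU : IsUtilityField P U U' U0 Uinf U'0) {x : ℝ} (hx : 0 < x) :
    AEMeasurable (fun ω => U' ω x) P :=
  aemeasurable_of_tendsto_nhdsGT_zero (F := fun ω t => t⁻¹ * (U ω (x + t) - U ω x))
    (fun _ ht => ((hU.aemeasurable _ (add_pos hx ht)).sub (hU.aemeasurable x hx)).const_mul _)
    (fun ω => (hU.hasDerivAt ω x hx).tendsto_slope_zero_right)

lemma aemeasurable_Ufield (hU : IsUtilityField P U U' U0 Uinf U'0) {v : Ω → ℝ}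
    (hv : AEMeasurable v P) : AEMeasurable (fun ω => Ufield U U0 ω (v ω)) P :=
  aemeasurable_ite_pos_of_continuousOn (fun x hx => (hU.aemeasurable x hx).coe_real_ereal)
    (fun ω => continuous_coe_real_ereal.comp_continuousOn (hU.continuousOn ω))
    (aemeasurable_of_tendsto_nhdsGT_zero (fun x hx => (hU.aemeasurable x hx).coe_real_ereal)
      hU.tendsto_zero) hv

lemma aemeasurable_derivField (hU : IsUtilityField P U U' U0 Uinf U'0) {v : Ω → ℝ}
    (hv : AEMeasurable v P) : AEMeasurable (fun ω => derivField U' U'0 ω (v ω)) P :=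
  aemeasurable_ite_pos_of_continuousOn (fun _ hx => (hU.aemeasurable_deriv hx).ennreal_ofReal)
    (fun ω => ENNReal.continuous_ofReal.comp_continuousOn (hU.continuousOn_deriv ω))
    (aemeasurable_of_tendsto_nhdsGT_zero (fun _ hx => (hU.aemeasurable_deriv hx).ennreal_ofReal)
      hU.tendsto_deriv_zero) hv

lemma pairing_muOf (hU : IsUtilityField P U U' U0 Uinf U'0) (g f : Ω →ₘ[P] ℝ) :
    pairing (muOf P U' U'0 g) f = ∫⁻ ω, derivField U' U'0 ω (g ω) * ENNReal.ofReal (f ω) ∂P :=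
  lintegral_withDensity_eq_lintegral_mul₀ (hU.aemeasurable_derivField g.aemeasurable)
    f.aemeasurable.ennreal_ofReal

lemma lintegral_erealPosPart_Ufield_lt_top (hU : IsUtilityField P U U' U0 Uinf U'0)
    (hUinf : ∫⁻ ω, erealPosPart (Uinf ω) ∂P < ⊤) (v : Ω → ℝ) :
    ∫⁻ ω, erealPosPart (Ufield U U0 ω (v ω)) ∂P < ⊤ :=
  (lintegral_mono fun ω => erealPosPart_mono (Ufield_le_Uinf (hU.monotoneOn ω)
    (hU.tendsto_zero ω) (hU.tendsto_atTop ω) _)).trans_lt hUinf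

lemma lintegral_erealPosPart_neg_Ufield_le (hU : IsUtilityField P U U' U0 Uinf U'0)
    {v w : Ω → ℝ} (hvw : v ≤ᵐ[P] w) :
    ∫⁻ ω, erealPosPart (-Ufield U U0 ω (w ω)) ∂P ≤ ∫⁻ ω, erealPosPart (-Ufield U U0 ω (v ω)) ∂P :=
  lintegral_mono_ae (hvw.mono fun ω h => erealPosPart_mono
    (EReal.neg_le_neg_iff.2 (monotone_Ufield (hU.monotoneOn ω) (hU.tendsto_zero ω) h)))

lemma EU_eq_integral (hU : IsUtilityField P U U' U0 Uinf U'0)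
    (hUinf : ∫⁻ ω, erealPosPart (Uinf ω) ∂P < ⊤) {w : Ω →ₘ[P] ℝ}
    (hneg : ∫⁻ ω, erealPosPart (-Ufield U U0 ω (w ω)) ∂P ≠ ⊤) :
    EU P U U0 w = ∫ ω, (Ufield U U0 ω (w ω)).toReal ∂P :=
  coe_lintegral_erealPosPart_sub_eq_integral (hU.aemeasurable_Ufield w.aemeasurable)
    (hU.lintegral_erealPosPart_Ufield_lt_top hUinf _).ne hneg

lemma integral_toReal_Ufield_le_of_EU_le (hU : IsUtilityField P U U' U0 Uinf U'0)
    (hUinf : ∫⁻ ω, erealPosPart (Uinf ω) ∂P < ⊤) {v w : Ω →ₘ[P] ℝ}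
    (hv : ∫⁻ ω, erealPosPart (-Ufield U U0 ω (v ω)) ∂P ≠ ⊤)
    (hw : ∫⁻ ω, erealPosPart (-Ufield U U0 ω (w ω)) ∂P ≠ ⊤) (h : EU P U U0 v ≤ EU P U U0 w) :
    ∫ ω, (Ufield U U0 ω (v ω)).toReal ∂P ≤ ∫ ω, (Ufield U U0 ω (w ω)).toReal ∂P := by
  rwa [hU.EU_eq_integral hUinf hv, hU.EU_eq_integral hUinf hw, EReal.coe_le_coe_iff] at h

lemma ae_Ufield_ne_bot (hU : IsUtilityField P U U' U0 Uinf U'0) {v : Ω → ℝ}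
    (hv : AEMeasurable v P) (hneg : ∫⁻ ω, erealPosPart (-Ufield U U0 ω (v ω)) ∂P ≠ ⊤) :
    ∀ᵐ ω ∂P, Ufield U U0 ω (v ω) ≠ ⊥ := by
  filter_upwards [ae_lt_top' (measurable_erealPosPart.comp_aemeasurable
    (hU.aemeasurable_Ufield hv).neg) hneg] with ω h hb
  simp [hb, erealPosPart] at h

lemma integrable_toReal_Ufield (hU : IsUtilityField P U U' U0 Uinf U'0)
    (hUinf : ∫⁻ ω, erealPosPart (Uinf ω) ∂P < ⊤) {v : Ω → ℝ} (hv : AEMeasurable v P)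
    (hneg : ∫⁻ ω, erealPosPart (-Ufield U U0 ω (v ω)) ∂P ≠ ⊤) :
    Integrable (fun ω => (Ufield U U0 ω (v ω)).toReal) P :=
  integrable_toReal_of_lintegral_erealPosPart_ne_top (hU.aemeasurable_Ufield hv)
    (hU.lintegral_erealPosPart_Ufield_lt_top hUinf _).ne hneg

lemma lintegral_derivField_half_mul_ne_top (hU : IsUtilityField P U U' U0 Uinf U'0)
    (hUinf : ∫⁻ ω, erealPosPart (Uinf ω) ∂P < ⊤) {g : Ω → ℝ} (hgm : AEMeasurable g P)
    (hg : 0 ≤ᵐ[P] g) (hneg : ∫⁻ ω, erealPosPart (-Ufield U U0 ω (4⁻¹ * g ω)) ∂P ≠ ⊤) :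
    ∫⁻ ω, derivField U' U'0 ω (2⁻¹ * g ω) * ENNReal.ofReal (g ω) ∂P ≠ ⊤ := by
  have hpt : ∀ᵐ ω ∂P, derivField U' U'0 ω (2⁻¹ * g ω) * ENNReal.ofReal (g ω)
      ≤ 4 * (erealPosPart (Ufield U U0 ω (2⁻¹ * g ω))
        + erealPosPart (-Ufield U U0 ω (4⁻¹ * g ω))) := by
    filter_upwards [hg] with ω (hω : 0 ≤ g ω)
    rcases hω.eq_or_lt with h | h
    · simp [← h]
    have h4 : ENNReal.ofReal (g ω) = 4 * ENNReal.ofReal (2⁻¹ * g ω - 4⁻¹ * g ω) := by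
      rw [← ENNReal.ofReal_ofNat 4, ← ENNReal.ofReal_mul (by norm_num)]
      ring_nf
    rw [h4, mul_left_comm]
    gcongr
    exact derivField_mul_sub_le (hU.concaveOn ω) (hU.hasDerivAt ω) (by positivity) (by linarith)
  refine ne_top_of_le_ne_top ?_ (lintegral_mono_ae hpt)
  rw [lintegral_const_mul' _ _ (by simp),
    lintegral_add_left' (f := fun ω => erealPosPart (Ufield U U0 ω (2⁻¹ * g ω)))
      (measurable_erealPosPart.comp_aemeasurable (hU.aemeasurable_Ufield (hgm.const_mul _)))]
  exact ENNReal.mul_ne_top (by simp)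
    (ENNReal.add_ne_top.2 ⟨(hU.lintegral_erealPosPart_Ufield_lt_top hUinf _).ne, hneg⟩)

lemma lintegral_derivField_mul_le_of_EU_le (hU : IsUtilityField P U U' U0 Uinf U'0)
    (hUinf : ∫⁻ ω, erealPosPart (Uinf ω) ∂P < ⊤) {f g w : Ω →ₘ[P] ℝ} (hf : 0 ≤ᵐ[P] f)
    (hg : 0 ≤ᵐ[P] g) {ε : ℝ} (hε0 : 0 < ε) (hε : ε ≤ 2⁻¹)
    (hw : ∀ᵐ ω ∂P, w ω = (1 - ε) * g ω + ε * f ω)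
    (hneg : ∫⁻ ω, erealPosPart (-Ufield U U0 ω (2⁻¹ * g ω)) ∂P ≠ ⊤)
    (hdom : ∫⁻ ω, derivField U' U'0 ω (2⁻¹ * g ω) * ENNReal.ofReal (g ω) ∂P ≠ ⊤)
    (hopt : EU P U U0 w ≤ EU P U U0 g) :
    ∫⁻ ω, derivField U' U'0 ω ((1 - ε) * g ω + ε * f ω) * ENNReal.ofReal (f ω) ∂P
      ≤ ∫⁻ ω, derivField U' U'0 ω ((1 - ε) * g ω + ε * f ω) * ENNReal.ofReal (g ω) ∂P := by
  set z : Ω → ℝ := fun ω => (1 - ε) * g ω + ε * f ω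
  set d : Ω → ℝ := fun ω => (derivField U' U'0 ω (z ω)).toReal
  have hzm : AEMeasurable z P :=
    (g.aemeasurable.const_mul _).add (f.aemeasurable.const_mul _)
  have hdm : AEMeasurable d P := (hU.aemeasurable_derivField hzm).ennreal_toReal
  have hz : ∀ᵐ ω ∂P, 2⁻¹ * g ω ≤ z ω ∧
      (derivField U' U'0 ω (z ω) ≠ ⊤ ∨ f ω = 0 ∧ g ω = 0) := by
    filter_upwards [hf, hg] with ω (hfω : 0 ≤ f ω) (hgω : 0 ≤ g ω)
    refine ⟨by nlinarith, ?_⟩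
    rcases (show 0 ≤ (1 - ε) * g ω + ε * f ω by nlinarith).eq_or_lt with h | h
    · exact Or.inr ⟨by nlinarith, by nlinarith⟩
    · exact Or.inl (derivField_ne_top h)
  have hneg_w : ∫⁻ ω, erealPosPart (-Ufield U U0 ω (w ω)) ∂P ≠ ⊤ :=
    ne_top_of_le_ne_top hneg (hU.lintegral_erealPosPart_neg_Ufield_le
      (by filter_upwards [hz, hw] with ω h hwω; rw [hwω]; exact h.1))
  have hneg_g : ∫⁻ ω, erealPosPart (-Ufield U U0 ω (g ω)) ∂P ≠ ⊤ :=
    ne_top_of_le_ne_top hneg (hU.lintegral_erealPosPart_neg_Ufield_le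
      (hg.mono fun ω (h : 0 ≤ g ω) => by linarith))
  have hint_w := hU.integrable_toReal_Ufield hUinf w.aemeasurable hneg_w
  have hint_g := hU.integrable_toReal_Ufield hUinf g.aemeasurable hneg_g
  have hdg : Integrable (fun ω => d ω * g ω) P := by
    refine (integrable_toReal_of_lintegral_ne_top ((hU.aemeasurable_derivField hzm).mul
      g.aemeasurable.ennreal_ofReal) (ne_top_of_le_ne_top hdom (lintegral_mono_ae ?_))).congr ?_
    · filter_upwards [hz] with ω h
      exact mul_le_mul_left (antitone_derivField (hU.concaveOn ω) (hU.hasDerivAt ω)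
        (hU.tendsto_deriv_zero ω) h.1) _
    · filter_upwards [hg] with ω (hgω : 0 ≤ g ω)
      simp only [Pi.mul_apply, ENNReal.toReal_mul, ENNReal.toReal_ofReal hgω, d]
  have hpt : ∀ᵐ ω ∂P, ε * (d ω * f ω)
      ≤ ε * (d ω * g ω) + ((Ufield U U0 ω (w ω)).toReal - (Ufield U U0 ω (g ω)).toReal) := by
    filter_upwards [hf, hg, hw, hU.ae_Ufield_ne_bot g.aemeasurable hneg_g]
      with ω hfω hgω hwω hbotω
    rw [hwω]
    exact toReal_derivField_mul_le (hU.monotoneOn ω) (hU.concaveOn ω) (hU.hasDerivAt ω)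
      (hU.tendsto_zero ω) hε0 (by linarith) hgω hfω hbotω
  obtain ⟨hdf, hreal⟩ := integrable_and_integral_le_of_mul_le_add_sub hε0
    (hf.mono fun ω (h : 0 ≤ f ω) => mul_nonneg ENNReal.toReal_nonneg h)
    (hdm.mul f.aemeasurable).aestronglyMeasurable hdg hint_w hint_g hpt
    (hU.integral_toReal_Ufield_le_of_EU_le hUinf hneg_w hneg_g hopt)
  rw [lintegral_mul_ofReal_eq_ofReal_integral hf (hz.mono fun ω h => h.2.imp id And.left) hdf,
    lintegral_mul_ofReal_eq_ofReal_integral hg (hz.mono fun ω h => h.2.imp id And.right) hdg]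
  exact ENNReal.ofReal_le_ofReal hreal

lemma lintegral_derivField_mul_le_of_tendsto (hU : IsUtilityField P U U' U0 Uinf U'0)
    {f g : Ω → ℝ} (hfm : AEMeasurable f P) (hgm : AEMeasurable g P) (hf : 0 ≤ᵐ[P] f)
    (hg : 0 ≤ᵐ[P] g) {ε : ℕ → ℝ} (hε : Tendsto ε atTop (𝓝 0)) (hε0 : ∀ n, 0 < ε n)
    (hε1 : ∀ n, ε n ≤ 2⁻¹)
    (hdom : ∫⁻ ω, derivField U' U'0 ω (2⁻¹ * g ω) * ENNReal.ofReal (g ω) ∂P ≠ ⊤)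
    (hle : ∀ n,
      ∫⁻ ω, derivField U' U'0 ω ((1 - ε n) * g ω + ε n * f ω) * ENNReal.ofReal (f ω) ∂P
        ≤ ∫⁻ ω, derivField U' U'0 ω ((1 - ε n) * g ω + ε n * f ω) * ENNReal.ofReal (g ω) ∂P) :
    ∫⁻ ω, derivField U' U'0 ω (g ω) * ENNReal.ofReal (f ω) ∂P
      ≤ ∫⁻ ω, derivField U' U'0 ω (g ω) * ENNReal.ofReal (g ω) ∂P := by
  have hm : ∀ t : Ω → ℝ, AEMeasurable t P → ∀ n, AEMeasurable (fun ω =>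
      derivField U' U'0 ω ((1 - ε n) * g ω + ε n * f ω) * ENNReal.ofReal (t ω)) P :=
    fun t ht n => (hU.aemeasurable_derivField ((hgm.const_mul _).add (hfm.const_mul _))).mul
      ht.ennreal_ofReal
  have hlim : ∀ t : Ω → ℝ, t ≤ᵐ[P] (fun ω => g ω + f ω) → ∀ᵐ ω ∂P, Tendsto (fun n =>
      derivField U' U'0 ω ((1 - ε n) * g ω + ε n * f ω) * ENNReal.ofReal (t ω)) atTop
      (𝓝 (derivField U' U'0 ω (g ω) * ENNReal.ofReal (t ω))) := fun t ht => by
    filter_upwards [hf, hg, ht] with ω hfω hgω htω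
    exact tendsto_derivField_convexComb_mul (hU.continuousOn_deriv ω) (hU.tendsto_deriv_zero ω)
      hε hε0 hε1 hgω hfω htω
  have hbound : ∀ n, (fun ω => derivField U' U'0 ω ((1 - ε n) * g ω + ε n * f ω)
      * ENNReal.ofReal (g ω)) ≤ᵐ[P]
      fun ω => derivField U' U'0 ω (2⁻¹ * g ω) * ENNReal.ofReal (g ω) := fun n => by
    filter_upwards [hf, hg] with ω (hfω : 0 ≤ f ω) (hgω : 0 ≤ g ω)
    exact mul_le_mul_left (antitone_derivField (hU.concaveOn ω) (hU.hasDerivAt ω)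
      (hU.tendsto_deriv_zero ω) (by nlinarith [hε0 n, hε1 n])) _
  calc ∫⁻ ω, derivField U' U'0 ω (g ω) * ENNReal.ofReal (f ω) ∂P
      = ∫⁻ ω, liminf (fun n => derivField U' U'0 ω ((1 - ε n) * g ω + ε n * f ω)
          * ENNReal.ofReal (f ω)) atTop ∂P :=
        lintegral_congr_ae ((hlim f (hg.mono fun ω (h : 0 ≤ g ω) => by linarith)).mono
          fun ω h => h.liminf_eq.symm)
    _ ≤ liminf (fun n => ∫⁻ ω, derivField U' U'0 ω ((1 - ε n) * g ω + ε n * f ω)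
          * ENNReal.ofReal (f ω) ∂P) atTop := lintegral_liminf_le' (hm f hfm)
    _ ≤ liminf (fun n => ∫⁻ ω, derivField U' U'0 ω ((1 - ε n) * g ω + ε n * f ω)
          * ENNReal.ofReal (g ω) ∂P) atTop := liminf_le_liminf (Eventually.of_forall hle)
    _ = ∫⁻ ω, derivField U' U'0 ω (g ω) * ENNReal.ofReal (g ω) ∂P :=
        (tendsto_lintegral_of_dominated_convergence' _ (hm g hgm) hbound hdom
          (hlim g (hf.mono fun ω (h : 0 ≤ f ω) => by linarith))).liminf_eq

lemma pairing_muOf_le_of_forall_EU_le (hU : IsUtilityField P U U' U0 Uinf U'0)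
    (hUinf : ∫⁻ ω, erealPosPart (Uinf ω) ∂P < ⊤) {C : Set (Ω →ₘ[P] ℝ)} (hC : C ⊆ L0plus P)
    (hconv : Convex ℝ C) {f g : Ω →ₘ[P] ℝ} (hfC : f ∈ C) (hgC : g ∈ C)
    (hopt : ∀ w ∈ C, EU P U U0 w ≤ EU P U U0 g)
    (hneg : ∫⁻ ω, erealPosPart (-Ufield U U0 ω (4⁻¹ * g ω)) ∂P ≠ ⊤) :
    pairing (muOf P U' U'0 g) f ≤ pairing (muOf P U' U'0 g) g := by
  rw [hU.pairing_muOf, hU.pairing_muOf]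
  have hf := ae_nonneg_of_mem_L0plus (hC hfC)
  have hg := ae_nonneg_of_mem_L0plus (hC hgC)
  have hneg' : ∫⁻ ω, erealPosPart (-Ufield U U0 ω (2⁻¹ * g ω)) ∂P ≠ ⊤ :=
    ne_top_of_le_ne_top hneg (hU.lintegral_erealPosPart_neg_Ufield_le
      (hg.mono fun ω (h : 0 ≤ g ω) => by linarith))
  have hdom := hU.lintegral_derivField_half_mul_ne_top hUinf g.aemeasurable hg hneg
  set ε : ℕ → ℝ := fun n => ((n : ℝ) + 2)⁻¹
  have hε0 : ∀ n, 0 < ε n := fun n => by positivity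
  have hε1 : ∀ n, ε n ≤ 2⁻¹ := fun n => inv_anti₀ two_pos (by linarith [n.cast_nonneg (α := ℝ)])
  have hε : Tendsto ε atTop (𝓝 0) := tendsto_inv_atTop_zero.comp
    (tendsto_atTop_add_const_right _ 2 tendsto_natCast_atTop_atTop)
  refine hU.lintegral_derivField_mul_le_of_tendsto f.aemeasurable g.aemeasurable hf hg hε hε0 hε1
    hdom fun n => hU.lintegral_derivField_mul_le_of_EU_le hUinf hf hg (hε0 n) (hε1 n) ?_ hneg'
      hdom (hopt _ (hconv hgC hfC (by linarith [hε1 n]) (hε0 n).le (sub_add_cancel 1 (ε n))))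
  filter_upwards [AEEqFun.coeFn_add ((1 - ε n) • g) (ε n • f), AEEqFun.coeFn_smul (1 - ε n) g,
    AEEqFun.coeFn_smul (ε n) f] with ω h1 h2 h3
  rw [h1, Pi.add_apply, h2, h3]
  rfl

lemma pairing_muOf_self_lt_top (hU : IsUtilityField P U U' U0 Uinf U'0)
    (hUinf : ∫⁻ ω, erealPosPart (Uinf ω) ∂P < ⊤) {g : Ω →ₘ[P] ℝ} (hg : 0 ≤ᵐ[P] g)
    (hneg : ∫⁻ ω, erealPosPart (-Ufield U U0 ω (4⁻¹ * g ω)) ∂P ≠ ⊤) :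
    pairing (muOf P U' U'0 g) g < ⊤ := by
  rw [hU.pairing_muOf]
  refine lt_of_le_of_lt (lintegral_mono_ae (hg.mono fun ω (h : 0 ≤ g ω) => ?_))
    (hU.lintegral_derivField_half_mul_ne_top hUinf g.aemeasurable hg hneg).lt_top
  exact mul_le_mul_left (antitone_derivField (hU.concaveOn ω) (hU.hasDerivAt ω)
    (hU.tendsto_deriv_zero ω) (by linarith)) _

lemma pairing_muOf_self_pos (hU : IsUtilityField P U U' U0 Uinf U'0) {g : Ω →ₘ[P] ℝ}
    (hnondeg : 0 < P {ω | 0 < g ω ∧ Ufield U U0 ω (g ω) < Uinf ω}) :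
    0 < pairing (muOf P U' U'0 g) g := by
  rw [hU.pairing_muOf]
  refine pos_iff_ne_zero.2 fun h0 => hnondeg.ne' (measure_eq_zero_iff_ae_notMem.2 ?_)
  filter_upwards [(lintegral_eq_zero_iff' ((hU.aemeasurable_derivField g.aemeasurable).mul
    g.aemeasurable.ennreal_ofReal)).1 h0] with ω hω ⟨hg, hlt⟩
  have hderiv : U' ω (g ω) ≤ 0 := by
    simpa [derivField_of_pos hg, not_le.2 hg] using hω
  rw [Ufield_of_pos hg, Uinf_eq_of_deriv_nonpos (hU.monotoneOn ω) (hU.concaveOn ω)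
    (hU.hasDerivAt ω) (hU.tendsto_atTop ω) hg hderiv] at hlt
  exact lt_irrefl _ hlt

lemma sigmaFinite_muOf (hU : IsUtilityField P U U' U0 Uinf U'0) [SigmaFinite P]
    {g h : Ω →ₘ[P] ℝ} (hh : ∀ᵐ ω ∂P, 0 < h ω) (hfin : pairing (muOf P U' U'0 g) h ≠ ⊤) :
    SigmaFinite (muOf P U' U'0 g) := by
  rw [hU.pairing_muOf] at hfin
  exact sigmaFinite_withDensity_of_lintegral_mul_ne_top (hU.aemeasurable_derivField
    g.aemeasurable) h.aemeasurable.ennreal_ofReal (hh.mono fun ω h => (ENNReal.ofReal_pos.2 h).ne')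
    hfin

end IsUtilityField

theorem statement17_general {Ω : Type*} [MeasurableSpace Ω] (P : Measure Ω) [IsProbabilityMeasure P]
    (U U' : Ω → ℝ → ℝ) (U0 Uinf : Ω → EReal) (U'0 : Ω → ENNReal)
    -- `U(·, x)` is a random variable for every `x ∈ (0, ∞)`:
    (hUmeas : ∀ x : ℝ, 0 < x → AEMeasurable (fun ω => U ω x) P)
    -- for each `ω`, `U(ω, ·)` is nondecreasing, concave and continuously differentiable
    -- on `(0, ∞)`, with derivative `U'(ω, ·)`:
    (hUmono : ∀ ω, MonotoneOn (U ω) (Set.Ioi 0))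
    (hUconc : ∀ ω, ConcaveOn ℝ (Set.Ioi 0) (U ω))
    (hUderiv : ∀ ω, ∀ x ∈ Set.Ioi (0:ℝ), HasDerivAt (U ω) (U' ω x) x)
    (hU'cont : ∀ ω, ContinuousOn (U' ω) (Set.Ioi 0))
    -- extensions by continuity: `U(·, 0)`, `U'(·, 0)` and `U(∞)`:
    (hU0 : ∀ ω, Tendsto (fun x => (U ω x : EReal)) (nhdsWithin 0 (Set.Ioi 0)) (nhds (U0 ω)))
    (hU'0 : ∀ ω, Tendsto (fun x => (ENNReal.ofReal (U' ω x)))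
      (nhdsWithin 0 (Set.Ioi 0)) (nhds (U'0 ω)))
    (hUinf : ∀ ω, Tendsto (fun x => (U ω x : EReal)) atTop (nhds (Uinf ω)))
    -- `E_P[0 ∨ U(∞)] < ∞`:
    (hUinfInt : ∫⁻ ω, erealPosPart (Uinf ω) ∂P < ⊤)
    -- `C ⊆ L⁰₊` convex, max-closed and bounded, containing some `h` with `P[h = 0] = 0`:
    (C : Set (Ω →ₘ[P] ℝ)) (hCL0 : C ⊆ L0plus P)
    (hconv : Convex ℝ C)
    (h : Ω →ₘ[P] ℝ) (hhC : h ∈ C) (hhpos : ∀ᵐ ω ∂P, h ω ≠ 0)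
    -- `g ∈ C^max` is an optimizer of `𝕌` over `C`, with `sup_{f ∈ C} 𝕌(f) < ∞`:
    (g : Ω →ₘ[P] ℝ) (hgmax : g ∈ maxSet P C)
    (hgopt : (⨆ f ∈ C, EU P U U0 f) = EU P U U0 g)
    -- `𝕌(n⁻¹ g) > -∞` for all `n ∈ ℕ`:
    (hgbelow : ∀ n : ℕ, 0 < n → ⊥ < EU P U U0 ((n : ℝ)⁻¹ • g))
    -- `P[g > 0, U(g) < U(∞)] > 0`:
    (hnondeg : 0 < P {ω | 0 < g ω ∧ Ufield U U0 ω (g ω) < Uinf ω}) :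
    g ∈ osp P C ∧
      muOf P U' U'0 g ≪ P ∧ SigmaFinite (muOf P U' U'0 g) ∧
      0 < pairing (muOf P U' U'0 g) g ∧ pairing (muOf P U' U'0 g) g < ⊤ ∧
      (⨆ f ∈ C, pairing (muOf P U' U'0 g) f) = pairing (muOf P U' U'0 g) g := by
  have hU : IsUtilityField P U U' U0 Uinf U'0 :=
    ⟨hUmeas, hUmono, hUconc, hUderiv, hU'cont, hU0, hU'0, hUinf⟩
  have hgC := hgmax.1
  have hg := ae_nonneg_of_mem_L0plus (hCL0 hgC)
  have hneg : ∫⁻ ω, erealPosPart (-Ufield U U0 ω (4⁻¹ * g ω)) ∂P ≠ ⊤ :=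
    lintegral_erealPosPart_neg_Ufield_ne_top_of_EU_ne_bot (by simpa using (hgbelow 4 four_pos).ne')
  have hle : ∀ f ∈ C, pairing (muOf P U' U'0 g) f ≤ pairing (muOf P U' U'0 g) g :=
    fun f hf => hU.pairing_muOf_le_of_forall_EU_le hUinfInt hCL0 hconv hf hgC
      (fun w hw => hgopt ▸ le_biSup _ hw) hneg
  have hfin := hU.pairing_muOf_self_lt_top hUinfInt hg hneg
  have hpos := hU.pairing_muOf_self_pos hnondeg
  have hh : ∀ᵐ ω ∂P, 0 < h ω := by
    filter_upwards [hhpos, ae_nonneg_of_mem_L0plus (hCL0 hhC)] with ω h0 (hnn : 0 ≤ h ω)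
    exact lt_of_le_of_ne hnn (Ne.symm h0)
  have hsf := hU.sigmaFinite_muOf hh ((hle h hhC).trans_lt hfin).ne
  have hsup : (⨆ f ∈ C, pairing (muOf P U' U'0 g) f) = pairing (muOf P U' U'0 g) g :=
    le_antisymm (iSup₂_le hle) (le_biSup _ hgC)
  have hac : muOf P U' U'0 g ≪ P := withDensity_absolutelyContinuous _ _
  exact ⟨⟨hgmax, Or.inr ⟨_, hac, hsf, hpos, hfin, hsup⟩⟩, hac, hsf, hpos, hfin, hsup⟩

/-- utility maximization and outer support points.
Let `U` be a utility random field with derivative field `U'`, extended values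
`U0 = U(·, 0⁺) ∈ [-∞, ∞)`, `U'0 = U'(·, 0⁺) ∈ [0, ∞]`, `Uinf = U(·, ∞)`, and with
`E_P[0 ∨ U(∞)] < ∞`. Let `C ⊆ L⁰₊` be convex, max-closed and bounded, containing some `h`
with `P[h = 0] = 0`, and let `g ∈ C^max` be an optimizer of `𝕌 = E_P[U(·)]` over `C` with
`sup_{f ∈ C} 𝕌(f) < ∞`, `𝕌(n⁻¹ g) > -∞` for all `n ∈ ℕ`, and
`P[g > 0, U(g) < U(∞)] > 0`. Then `g` is an outer support point of `C`; in fact the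
σ-finite measure `μ` with `dμ = U'(g) dP` satisfies
`0 < sup_{f ∈ C} ∫ f dμ = ∫ g dμ < ∞`. -/
theorem statement17 {Ω : Type*} [MeasurableSpace Ω] (P : Measure Ω) [IsProbabilityMeasure P]
    (U U' : Ω → ℝ → ℝ) (U0 Uinf : Ω → EReal) (U'0 : Ω → ENNReal)
    -- `U(·, x)` is a random variable for every `x ∈ (0, ∞)`:
    (hUmeas : ∀ x : ℝ, 0 < x → AEMeasurable (fun ω => U ω x) P)
    -- for each `ω`, `U(ω, ·)` is nondecreasing, concave and continuously differentiable
    -- on `(0, ∞)`, with derivative `U'(ω, ·)`: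
    (hUmono : ∀ ω, MonotoneOn (U ω) (Set.Ioi 0))
    (hUconc : ∀ ω, ConcaveOn ℝ (Set.Ioi 0) (U ω))
    (hUderiv : ∀ ω, ∀ x ∈ Set.Ioi (0:ℝ), HasDerivAt (U ω) (U' ω x) x)
    (hU'cont : ∀ ω, ContinuousOn (U' ω) (Set.Ioi 0))
    -- extensions by continuity: `U(·, 0)`, `U'(·, 0)` and `U(∞)`:
    (hU0 : ∀ ω, Tendsto (fun x => (U ω x : EReal)) (nhdsWithin 0 (Set.Ioi 0)) (nhds (U0 ω)))
    (hU'0 : ∀ ω, Tendsto (fun x => (ENNReal.ofReal (U' ω x)))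
      (nhdsWithin 0 (Set.Ioi 0)) (nhds (U'0 ω)))
    (hUinf : ∀ ω, Tendsto (fun x => (U ω x : EReal)) atTop (nhds (Uinf ω)))
    -- `E_P[0 ∨ U(∞)] < ∞`:
    (hUinfInt : ∫⁻ ω, erealPosPart (Uinf ω) ∂P < ⊤)
    -- `C ⊆ L⁰₊` convex, max-closed and bounded, containing some `h` with `P[h = 0] = 0`:
    (C : Set (Ω →ₘ[P] ℝ)) (hCL0 : C ⊆ L0plus P)
    (hconv : Convex ℝ C) (hmaxcl : MaxClosed P C) (hbdd : Bounded0 P C)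
    (h : Ω →ₘ[P] ℝ) (hhC : h ∈ C) (hhpos : ∀ᵐ ω ∂P, h ω ≠ 0)
    -- `g ∈ C^max` is an optimizer of `𝕌` over `C`, with `sup_{f ∈ C} 𝕌(f) < ∞`:
    (g : Ω →ₘ[P] ℝ) (hgmax : g ∈ maxSet P C)
    (hgopt : (⨆ f ∈ C, EU P U U0 f) = EU P U U0 g) (hgfin : EU P U U0 g < ⊤)
    -- `𝕌(n⁻¹ g) > -∞` for all `n ∈ ℕ`:
    (hgbelow : ∀ n : ℕ, 0 < n → ⊥ < EU P U U0 ((n : ℝ)⁻¹ • g))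
    -- `P[g > 0, U(g) < U(∞)] > 0`:
    (hnondeg : 0 < P {ω | 0 < g ω ∧ Ufield U U0 ω (g ω) < Uinf ω}) :
    g ∈ osp P C ∧
      muOf P U' U'0 g ≪ P ∧ SigmaFinite (muOf P U' U'0 g) ∧
      0 < pairing (muOf P U' U'0 g) g ∧ pairing (muOf P U' U'0 g) g < ⊤ ∧
      (⨆ f ∈ C, pairing (muOf P U' U'0 g) f) = pairing (muOf P U' U'0 g) g :=
  statement17_general P U U' U0 Uinf U'0 hUmeas hUmono hUconc hUderiv hU'cont hU0 hU'0 hUinf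
    hUinfInt C hCL0 hconv h hhC hhpos g hgmax hgopt hgbelow hnondeg
end
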